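/- Let n ≥ 4 and let (X₁,Y₁), …, (Xₙ,Yₙ) be independent and identically distributed copies of a pair (X,Y) of real-valued random variables with E[X²] < ∞ and E[Y²] < ∞. With a_{kl} = |X_k − X_l|, b_{kl} = |Y_k − Y_l|, and the 𝒰-centered matrices Ã_{kl} = a_{kl} − (1/(n−2))Σ_{j=1}^n a_{kj} − (1/(n−2))Σ_{i=1}^n a_{il} + (1/((n−1)(n−2)))Σ_{i,j=1}^n a_{ij} for k ≠ l and Ã_{kk} = 0 (and B̃ defined analogously from b), the statistic (1/(n(n−3)))·Σ_{k≠l} Ã_{kl}·B̃_{kl} is an unbiased estimator of the squared distance covariance: E[(1/(n(n−3)))·Σ_{k≠l} Ã_{kl}·B̃_{kl}] = dCov²(X,Y). -/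

import Mathlib

open MeasureTheory ProbabilityTheory Finset


lemma sum_fin_one' {n : ℕ} (hn : 1 ≤ n) (k : Fin n) (f : Fin n → ℝ) (x c : ℝ)
    (hk : f k = x) (ho : ∀ j, j ≠ k → f j = c) :
    ∑ j, f j = x + ((n : ℝ) - 1) * c := by
  classical
  have hsub : ({k} : Finset (Fin n)) ⊆ univ := subset_univ _
  rw [← Finset.sum_sdiff hsub, Finset.sum_singleton, hk]
  have hc : ∀ j ∈ (univ \ {k} : Finset (Fin n)), f j = c := by
    intro j hj
    exact ho j (by simpa using (Finset.mem_sdiff.mp hj).2)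
  rw [Finset.sum_congr rfl hc, Finset.sum_const, Finset.card_sdiff_of_subset hsub, Finset.card_singleton,
    card_univ, Fintype.card_fin, nsmul_eq_mul, Nat.cast_sub hn]
  push_cast
  ring

lemma sum_fin_two' {n : ℕ} (hn : 2 ≤ n) {k l : Fin n} (hkl : k ≠ l) (f : Fin n → ℝ) (x y c : ℝ)
    (hk : f k = x) (hl : f l = y) (ho : ∀ j, j ≠ k → j ≠ l → f j = c) :
    ∑ j, f j = x + y + ((n : ℝ) - 2) * c := by
  classical
  have hsub : ({k, l} : Finset (Fin n)) ⊆ univ := subset_univ _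
  rw [← Finset.sum_sdiff hsub, Finset.sum_pair hkl, hk, hl]
  have hc : ∀ j ∈ (univ \ {k, l} : Finset (Fin n)), f j = c := by
    intro j hj
    have := (Finset.mem_sdiff.mp hj).2
    simp only [Finset.mem_insert, Finset.mem_singleton, not_or] at this
    exact ho j this.1 this.2
  rw [Finset.sum_congr rfl hc, Finset.sum_const, Finset.card_sdiff_of_subset hsub, Finset.card_pair hkl,
    card_univ, Fintype.card_fin, nsmul_eq_mul, Nat.cast_sub hn]
  push_cast
  ring

lemma sum_fin_three' {n : ℕ} (hn : 3 ≤ n) {k l m : Fin n} (hkl : k ≠ l) (hkm : k ≠ m)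
    (hlm : l ≠ m) (f : Fin n → ℝ) (x y z c : ℝ)
    (hk : f k = x) (hl : f l = y) (hm : f m = z)
    (ho : ∀ j, j ≠ k → j ≠ l → j ≠ m → f j = c) :
    ∑ j, f j = x + y + z + ((n : ℝ) - 3) * c := by
  classical
  have hsub : ({k, l, m} : Finset (Fin n)) ⊆ univ := subset_univ _
  have hknot : k ∉ ({l, m} : Finset (Fin n)) := by simp [hkl, hkm]
  rw [← Finset.sum_sdiff hsub, Finset.sum_insert hknot, Finset.sum_pair hlm, hk, hl, hm]
  have hc : ∀ j ∈ (univ \ {k, l, m} : Finset (Fin n)), f j = c := by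
    intro j hj
    have := (Finset.mem_sdiff.mp hj).2
    simp only [Finset.mem_insert, Finset.mem_singleton, not_or] at this
    exact ho j this.1 this.2.1 this.2.2
  have hcard : ({k, l, m} : Finset (Fin n)).card = 3 := by
    rw [Finset.card_insert_of_notMem hknot, Finset.card_pair hlm]
  rw [Finset.sum_congr rfl hc, Finset.sum_const, Finset.card_sdiff_of_subset hsub, hcard,
    card_univ, Fintype.card_fin, nsmul_eq_mul, Nat.cast_sub hn]
  push_cast
  ring


lemma key4mul {Ω : Type*} (e f : Fin 4 → ℝ) (p q : Fin 4 → Ω → ℝ) (ω : Ω) :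
    (∑ i, e i * p i ω) * (∑ j, f j * q j ω)
      = ∑ i, ∑ j, e i * f j * (p i ω * q j ω) := by
  rw [Fintype.sum_mul_sum]
  exact Finset.sum_congr rfl fun i _ => Finset.sum_congr rfl fun j _ => by ring

lemma expand16 {Ω : Type*} [MeasurableSpace Ω] (μ : Measure Ω) (e f : Fin 4 → ℝ)
    (p q : Fin 4 → Ω → ℝ) (h : ∀ i j, Integrable (fun ω => p i ω * q j ω) μ) :
    ∫ ω, (∑ i, e i * p i ω) * (∑ j, f j * q j ω) ∂μ
      = ∑ i, ∑ j, e i * f j * ∫ ω, p i ω * q j ω ∂μ := by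
  simp_rw [key4mul]
  rw [integral_finset_sum _ (fun i _ =>
    integrable_finset_sum _ (fun j _ => ((h i j).const_mul _)))]
  refine Finset.sum_congr rfl fun i _ => ?_
  rw [integral_finset_sum _ (fun j _ => (h i j).const_mul _)]
  exact Finset.sum_congr rfl fun j _ => integral_const_mul _ _

lemma integrable16 {Ω : Type*} [MeasurableSpace Ω] (μ : Measure Ω) (e f : Fin 4 → ℝ)
    (p q : Fin 4 → Ω → ℝ) (h : ∀ i j, Integrable (fun ω => p i ω * q j ω) μ) :
    Integrable (fun ω => (∑ i, e i * p i ω) * (∑ j, f j * q j ω)) μ := by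
  simp_rw [key4mul]
  exact integrable_finset_sum _ (fun i _ =>
    integrable_finset_sum _ (fun j _ => (h i j).const_mul _))

lemma integral_sum_mul_sum' {Ω ι κ : Type*} [MeasurableSpace Ω] (μ : Measure Ω)
    (s : Finset ι) (t : Finset κ) (F : ι → Ω → ℝ) (G : κ → Ω → ℝ)
    (h : ∀ i j, Integrable (fun ω => F i ω * G j ω) μ) :
    ∫ ω, (∑ i ∈ s, F i ω) * (∑ j ∈ t, G j ω) ∂μ
      = ∑ i ∈ s, ∑ j ∈ t, ∫ ω, F i ω * G j ω ∂μ := by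
  simp_rw [Finset.sum_mul_sum]
  rw [integral_finset_sum _ (fun i _ => integrable_finset_sum _ (fun j _ => h i j))]
  exact Finset.sum_congr rfl fun i _ => integral_finset_sum _ (fun j _ => h i j)

lemma L2mul_integrable {Ω : Type*} [MeasurableSpace Ω] {μ : Measure Ω} {f g : Ω → ℝ}
    (hf : MemLp f 2 μ) (hg : MemLp g 2 μ) :
    Integrable (fun ω => f ω * g ω) μ := by
  have h := hg.smul (φ := f) hf (p := 2) (q := 2) (r := 1)
  have h2 : (f • g) = fun ω => f ω * g ω := rfl
  rw [h2] at h
  exact memLp_one_iff_integrable.mp h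
section Comb
variable {n : ℕ} {I : Fin n → Fin n → Fin n → Fin n → ℝ} {α β γ : ℝ}
    (hI : ∀ i j s t, I i j s t =
      if i = j ∨ s = t then 0
      else if (s = i ∧ t = j) ∨ (s = j ∧ t = i) then α
      else if s = i ∨ s = j ∨ t = i ∨ t = j then γ
      else β)
    (hn : 4 ≤ n)

include hI hn

lemma cE1 {k l : Fin n} (hkl : k ≠ l) : ∑ y, I k l k y = α + ((n:ℝ)-2) * γ := by
  refine (sum_fin_two' (by omega) hkl _ 0 α γ (by simp [hI]) (by simp [hI, hkl])
    (fun j h1 h2 => by simp [hI, hkl, h1, h2, h1.symm, h2.symm])).trans (by ring)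

lemma cE2 {k l : Fin n} (hkl : k ≠ l) : ∑ x, I k l x l = α + ((n:ℝ)-2) * γ := by
  refine (sum_fin_two' (by omega) hkl _ α 0 γ (by simp [hI, hkl]) (by simp [hI])
    (fun j h1 h2 => by simp [hI, hkl, h1, h2, h1.symm, h2.symm])).trans (by ring)

lemma cE2' {k l : Fin n} (hkl : k ≠ l) : ∑ y, I k l l y = α + ((n:ℝ)-2) * γ := by
  refine (sum_fin_two' (by omega) hkl _ α 0 γ (by simp [hI, hkl, hkl.symm]) (by simp [hI])
    (fun j h1 h2 => by simp [hI, hkl, h1, h2, h1.symm, h2.symm])).trans (by ring)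

lemma cE3 {k l i : Fin n} (hkl : k ≠ l) (hik : i ≠ k) (hil : i ≠ l) :
    ∑ y, I k l i y = 2*γ + ((n:ℝ)-3) * β := by
  refine (sum_fin_three' (by omega) hkl (hik.symm) (hil.symm) _ γ γ 0 β
    (by simp [hI, hkl, hik, hil, hik.symm, hil.symm])
    (by simp [hI, hkl, hik, hil, hik.symm, hil.symm])
    (by simp [hI])
    (fun j h1 h2 h3 => by
      simp [hI, hkl, hik, hil, hik.symm, hil.symm, h1, h2, h3, h1.symm, h2.symm, h3.symm])).trans
    (by ring)

lemma cA3 {k l : Fin n} (hkl : k ≠ l) :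
    ∑ x, ∑ y, I k l x y = 2*α + 4*((n:ℝ)-2)*γ + ((n:ℝ)-2)*((n:ℝ)-3)*β := by
  refine (sum_fin_two' (by omega) hkl _ (α + ((n:ℝ)-2) * γ) (α + ((n:ℝ)-2) * γ)
    (2*γ + ((n:ℝ)-3) * β) (cE1 hI hn hkl) (cE2' hI hn hkl)
    (fun j h1 h2 => cE3 hI hn hkl h1 h2)).trans (by ring)

lemma cA4 {k l : Fin n} (hkl : k ≠ l) : ∑ y, I k y k l = α + ((n:ℝ)-2) * γ := by
  refine (sum_fin_two' (by omega) hkl _ 0 α γ (by simp [hI]) (by simp [hI, hkl])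
    (fun j h1 h2 => by simp [hI, hkl, h1, h2, h1.symm, h2.symm])).trans (by ring)

lemma cA5 {k : Fin n} : ∑ y, ∑ y', I k y k y' = ((n:ℝ)-1) * (α + ((n:ℝ)-2) * γ) := by
  refine (sum_fin_one' (by omega) k _ 0 (α + ((n:ℝ)-2) * γ)
    (Finset.sum_eq_zero fun y _ => by simp [hI])
    (fun j h1 => cE1 hI hn h1.symm)).trans (by ring)

lemma cE4 {k l j : Fin n} (hkl : k ≠ l) (hjk : j ≠ k) (hjl : j ≠ l) :
    ∑ x, I k j x l = 2*γ + ((n:ℝ)-3) * β := by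
  refine (sum_fin_three' (by omega) hjk.symm hkl hjl _ γ γ 0 β
    (by simp [hI, hkl, hkl.symm, hjk, hjl, hjk.symm, hjl.symm])
    (by simp [hI, hkl, hkl.symm, hjk, hjl, hjk.symm, hjl.symm])
    (by simp [hI])
    (fun x h1 h2 h3 => by
      simp [hI, hkl, hkl.symm, hjk, hjl, hjk.symm, hjl.symm, h1, h2, h3, h1.symm, h2.symm,
        h3.symm])).trans
    (by ring)

lemma cA6 {k l : Fin n} (hkl : k ≠ l) :
    ∑ y, ∑ x, I k y x l = α + 3*((n:ℝ)-2)*γ + ((n:ℝ)-2)*((n:ℝ)-3)*β := by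
  refine (sum_fin_two' (by omega) hkl _ 0 (α + ((n:ℝ)-2) * γ) (2*γ + ((n:ℝ)-3) * β)
    (Finset.sum_eq_zero fun x _ => by simp [hI]) (cE2 hI hn hkl)
    (fun j h1 h2 => cE4 hI hn hkl h1 h2)).trans (by ring)

lemma cA8 {k l : Fin n} (hkl : k ≠ l) : ∑ x, I x l k l = α + ((n:ℝ)-2) * γ := by
  refine (sum_fin_two' (by omega) hkl _ α 0 γ (by simp [hI, hkl]) (by simp [hI])
    (fun j h1 h2 => by simp [hI, hkl, h1, h2, h1.symm, h2.symm])).trans (by ring)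

lemma cE5 {k l i : Fin n} (hkl : k ≠ l) (hik : i ≠ k) (hil : i ≠ l) :
    ∑ y, I i l k y = 2*γ + ((n:ℝ)-3) * β := by
  refine (sum_fin_three' (by omega) hil hik hkl.symm _ γ γ 0 β
    (by simp [hI, hkl, hik, hil, hik.symm, hil.symm, hkl.symm])
    (by simp [hI, hkl, hik, hil, hik.symm, hil.symm, hkl.symm])
    (by simp [hI])
    (fun y h1 h2 h3 => by
      simp [hI, hkl, hik, hil, hik.symm, hil.symm, hkl.symm, h1, h2, h3, h1.symm, h2.symm,
        h3.symm])).trans (by ring)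

lemma cA9 {k l : Fin n} (hkl : k ≠ l) :
    ∑ x, ∑ y, I x l k y = α + 3*((n:ℝ)-2)*γ + ((n:ℝ)-2)*((n:ℝ)-3)*β := by
  refine (sum_fin_two' (by omega) hkl _ (α + ((n:ℝ)-2) * γ) 0 (2*γ + ((n:ℝ)-3) * β)
    (cE1 hI hn hkl) (Finset.sum_eq_zero fun y _ => by simp [hI])
    (fun i h1 h2 => cE5 hI hn hkl h1 h2)).trans (by ring)

lemma cA10 {l : Fin n} : ∑ x, ∑ x', I x l x' l = ((n:ℝ)-1) * (α + ((n:ℝ)-2) * γ) := by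
  refine (sum_fin_one' (by omega) l _ 0 (α + ((n:ℝ)-2) * γ)
    (Finset.sum_eq_zero fun x _ => by simp [hI])
    (fun i h1 => cE2 hI hn h1)).trans (by ring)

lemma cA7 {k : Fin n} :
    ∑ y, ∑ x, ∑ y', I k y x y'
      = ((n:ℝ)-1) * (2*α + 4*((n:ℝ)-2)*γ + ((n:ℝ)-2)*((n:ℝ)-3)*β) := by
  refine (sum_fin_one' (by omega) k _ 0 _
    (Finset.sum_eq_zero fun x _ => Finset.sum_eq_zero fun y _ => by simp [hI])
    (fun j h1 => cA3 hI hn h1.symm)).trans (by ring)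

lemma cA11 {l : Fin n} :
    ∑ x, ∑ x', ∑ y, I x l x' y
      = ((n:ℝ)-1) * (2*α + 4*((n:ℝ)-2)*γ + ((n:ℝ)-2)*((n:ℝ)-3)*β) := by
  refine (sum_fin_one' (by omega) l _ 0 _
    (Finset.sum_eq_zero fun x _ => Finset.sum_eq_zero fun y _ => by simp [hI])
    (fun i h1 => cA3 hI hn h1)).trans (by ring)

lemma cE6 {k l : Fin n} (hkl : k ≠ l) : ∑ y, I l y k l = α + ((n:ℝ)-2) * γ := by
  refine (sum_fin_two' (by omega) hkl _ α 0 γ (by simp [hI, hkl, hkl.symm]) (by simp [hI])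
    (fun j h1 h2 => by simp [hI, hkl, h1, h2, h1.symm, h2.symm, hkl.symm])).trans (by ring)

lemma cE7 {k l i : Fin n} (hkl : k ≠ l) (hik : i ≠ k) (hil : i ≠ l) :
    ∑ y, I i y k l = 2*γ + ((n:ℝ)-3) * β := by
  refine (sum_fin_three' (by omega) hkl hik.symm hil.symm _ γ γ 0 β
    (by simp [hI, hkl, hik, hil, hik.symm, hil.symm])
    (by simp [hI, hkl, hik, hil, hik.symm, hil.symm])
    (by simp [hI])
    (fun y h1 h2 h3 => by
      simp [hI, hkl, hik, hil, hik.symm, hil.symm, h1, h2, h3, h1.symm, h2.symm, h3.symm])).trans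
    (by ring)

lemma cA12 {k l : Fin n} (hkl : k ≠ l) :
    ∑ x, ∑ y, I x y k l = 2*α + 4*((n:ℝ)-2)*γ + ((n:ℝ)-2)*((n:ℝ)-3)*β := by
  refine (sum_fin_two' (by omega) hkl _ (α + ((n:ℝ)-2) * γ) (α + ((n:ℝ)-2) * γ)
    (2*γ + ((n:ℝ)-3) * β) (cA4 hI hn hkl) (cE6 hI hn hkl)
    (fun i h1 h2 => cE7 hI hn hkl h1 h2)).trans (by ring)

lemma cA13 {k : Fin n} :
    ∑ x, ∑ y, ∑ y', I x y k y'
      = ((n:ℝ)-1) * (2*α + 4*((n:ℝ)-2)*γ + ((n:ℝ)-2)*((n:ℝ)-3)*β) := by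
  have hswap : ∀ x : Fin n, ∑ y, ∑ y', I x y k y' = ∑ y', ∑ y, I x y k y' :=
    fun x => Finset.sum_comm
  simp_rw [hswap]
  rw [Finset.sum_comm]
  refine (sum_fin_one' (by omega) k _ 0 _
    (Finset.sum_eq_zero fun x _ => Finset.sum_eq_zero fun y _ => by simp [hI])
    (fun j h1 => cA12 hI hn h1.symm)).trans (by ring)

lemma cA14 {l : Fin n} :
    ∑ x, ∑ y, ∑ x', I x y x' l
      = ((n:ℝ)-1) * (2*α + 4*((n:ℝ)-2)*γ + ((n:ℝ)-2)*((n:ℝ)-3)*β) := by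
  have hswap : ∀ x : Fin n, ∑ y, ∑ x', I x y x' l = ∑ x', ∑ y, I x y x' l :=
    fun x => Finset.sum_comm
  simp_rw [hswap]
  rw [Finset.sum_comm]
  refine (sum_fin_one' (by omega) l _ 0 _
    (Finset.sum_eq_zero fun x _ => Finset.sum_eq_zero fun y _ => by simp [hI])
    (fun i h1 => cA12 hI hn h1)).trans (by ring)

lemma cA15 :
    ∑ x : Fin n, ∑ y, ∑ x', ∑ y', I x y x' y'
      = (n:ℝ)*((n:ℝ)-1) * (2*α + 4*((n:ℝ)-2)*γ + ((n:ℝ)-2)*((n:ℝ)-3)*β) := by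
  have hx : ∀ x : Fin n, ∑ y, ∑ x', ∑ y', I x y x' y'
      = ((n:ℝ)-1) * (2*α + 4*((n:ℝ)-2)*γ + ((n:ℝ)-2)*((n:ℝ)-3)*β) := by
    intro x
    refine (sum_fin_one' (by omega) x _ 0 _
      (Finset.sum_eq_zero fun x' _ => Finset.sum_eq_zero fun y' _ => by simp [hI])
      (fun y h1 => cA3 hI hn h1.symm)).trans (by ring)
  rw [Finset.sum_congr rfl (fun x _ => hx x), Finset.sum_const, card_univ, Fintype.card_fin,
    nsmul_eq_mul]
  ring

end Comb

/-- The `𝒰`-centered version of a matrix `a` (indexed by `Fin n`):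
`Ã_{kl} = a_{kl} − (1/(n−2))·Σ_j a_{kj} − (1/(n−2))·Σ_i a_{il}
  + (1/((n−1)(n−2)))·Σ_{i,j} a_{ij}` for `k ≠ l`, and `Ã_{kk} = 0`. -/
noncomputable def uCenter (n : ℕ) (a : Fin n → Fin n → ℝ) (k l : Fin n) : ℝ :=
  if k = l then 0
  else a k l - (1 / ((n : ℝ) - 2)) * ∑ j, a k j - (1 / ((n : ℝ) - 2)) * ∑ i, a i l
    + (1 / (((n : ℝ) - 1) * ((n : ℝ) - 2))) * ∑ i, ∑ j, a i j

set_option maxHeartbeats 2000000 in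
theorem uStatistic_unbiased_for_squared_distance_covariance
    {Ω : Type*} [MeasurableSpace Ω] (μ : Measure Ω) [IsProbabilityMeasure μ]
    (n : ℕ) (hn : 4 ≤ n)
    (X Y : Ω → ℝ) (hXm : Measurable X) (hYm : Measurable Y)
    (hX : MemLp X 2 μ) (hY : MemLp Y 2 μ)
    (Z : Fin n → Ω → ℝ × ℝ) (hmeas : ∀ i, Measurable (Z i))
    (hindep : iIndepFun Z μ)
    (hlaw : ∀ i, μ.map (Z i) = μ.map (fun ω => (X ω, Y ω))) :
    ∫ ω, (1 / ((n : ℝ) * ((n : ℝ) - 3))) *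
        ∑ k, ∑ l, (if k ≠ l then
          uCenter n (fun k' l' => |(Z k' ω).1 - (Z l' ω).1|) k l *
            uCenter n (fun k' l' => |(Z k' ω).2 - (Z l' ω).2|) k l
          else 0) ∂μ
      = (∫ ω, |(Z ⟨0, by omega⟩ ω).1 - (Z ⟨1, by omega⟩ ω).1|
            * |(Z ⟨0, by omega⟩ ω).2 - (Z ⟨1, by omega⟩ ω).2| ∂μ)
        + (∫ ω, |(Z ⟨0, by omega⟩ ω).1 - (Z ⟨1, by omega⟩ ω).1| ∂μ)
          * (∫ ω, |(Z ⟨0, by omega⟩ ω).2 - (Z ⟨1, by omega⟩ ω).2| ∂μ)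
        - 2 * ∫ ω, |(Z ⟨0, by omega⟩ ω).1 - (Z ⟨1, by omega⟩ ω).1|
            * |(Z ⟨0, by omega⟩ ω).2 - (Z ⟨2, by omega⟩ ω).2| ∂μ := by
  classical
  have hnR : (4 : ℝ) ≤ (n : ℝ) := by exact_mod_cast hn
  have hn0 : (n : ℝ) ≠ 0 := ne_of_gt (by linarith)
  have hn1 : (n : ℝ) - 1 ≠ 0 := ne_of_gt (by linarith)
  have hn2 : (n : ℝ) - 2 ≠ 0 := ne_of_gt (by linarith)
  have hn3 : (n : ℝ) - 3 ≠ 0 := ne_of_gt (by linarith)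
  have h01 : (⟨0, by omega⟩ : Fin n) ≠ ⟨1, by omega⟩ := by simp [Fin.ext_iff]
  have h02 : (⟨0, by omega⟩ : Fin n) ≠ ⟨2, by omega⟩ := by simp [Fin.ext_iff]
  have h12 : (⟨1, by omega⟩ : Fin n) ≠ ⟨2, by omega⟩ := by simp [Fin.ext_iff]
  have hXYm : Measurable fun ω => (X ω, Y ω) := hXm.prodMk hYm
  set ν : Measure (ℝ × ℝ) := μ.map (fun ω => (X ω, Y ω)) with hν
  haveI : IsProbabilityMeasure ν := Measure.isProbabilityMeasure_map hXYm.aemeasurable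
  set αv : ℝ := ∫ p : (ℝ × ℝ) × (ℝ × ℝ), |p.1.1 - p.2.1| * |p.1.2 - p.2.2| ∂(ν.prod ν) with hαv
  set Av : ℝ := ∫ p : (ℝ × ℝ) × (ℝ × ℝ), |p.1.1 - p.2.1| ∂(ν.prod ν) with hAv
  set Bv : ℝ := ∫ p : (ℝ × ℝ) × (ℝ × ℝ), |p.1.2 - p.2.2| ∂(ν.prod ν) with hBv
  set γv : ℝ := ∫ q : (ℝ × ℝ) × ((ℝ × ℝ) × (ℝ × ℝ)), |q.1.1 - q.2.1.1| * |q.1.2 - q.2.2.2|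
    ∂(ν.prod (ν.prod ν)) with hγv
  -- joint laws
  have hpair : ∀ i j : Fin n, i ≠ j → μ.map (fun ω => (Z i ω, Z j ω)) = ν.prod ν := by
    intro i j hij
    rw [(indepFun_iff_map_prod_eq_prod_map_map (hmeas i).aemeasurable
      (hmeas j).aemeasurable).mp (hindep.indepFun hij), hlaw i, hlaw j]
  have htrip : ∀ u v w : Fin n, u ≠ v → u ≠ w → v ≠ w →
      μ.map (fun ω => (Z u ω, (Z v ω, Z w ω))) = ν.prod (ν.prod ν) := by
    intro u v w huv huw hvw
    have h1 : IndepFun (Z u) (fun ω => (Z v ω, Z w ω)) μ :=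
      (hindep.indepFun_prodMk hmeas v w u huv.symm huw.symm).symm
    rw [(indepFun_iff_map_prod_eq_prod_map_map (hmeas u).aemeasurable
      ((hmeas v).prodMk (hmeas w)).aemeasurable).mp h1, hlaw u, hpair v w hvw]
  have hquad : ∀ i j s t : Fin n, i ≠ j → s ≠ t → i ≠ s → i ≠ t → j ≠ s → j ≠ t →
      μ.map (fun ω => ((Z i ω, Z j ω), (Z s ω, Z t ω))) = (ν.prod ν).prod (ν.prod ν) := by
    intro i j s t hij hst his hit hjs hjt
    have h1 : IndepFun (fun ω => (Z i ω, Z j ω)) (fun ω => (Z s ω, Z t ω)) μ :=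
      hindep.indepFun_prodMk_prodMk hmeas i j s t his hit hjs hjt
    rw [(indepFun_iff_map_prod_eq_prod_map_map ((hmeas i).prodMk (hmeas j)).aemeasurable
      ((hmeas s).prodMk (hmeas t)).aemeasurable).mp h1, hpair i j hij, hpair s t hst]
  -- canonical integrals
  have hIpair : ∀ i j : Fin n, i ≠ j →
      (∫ ω, |(Z i ω).1 - (Z j ω).1| * |(Z i ω).2 - (Z j ω).2| ∂μ) = αv := by
    intro i j hij
    have hgm : Measurable (fun p : (ℝ × ℝ) × (ℝ × ℝ) => |p.1.1 - p.2.1| * |p.1.2 - p.2.2|) :=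
      (measurable_fst.fst.sub measurable_snd.fst).abs.mul
        ((measurable_fst.snd.sub measurable_snd.snd).abs)
    have h := integral_map (μ := μ) ((hmeas i).prodMk (hmeas j)).aemeasurable
      hgm.aestronglyMeasurable
    rw [hpair i j hij] at h
    exact h.symm
  have hγint : ∀ u v w : Fin n, u ≠ v → u ≠ w → v ≠ w →
      (∫ ω, |(Z u ω).1 - (Z v ω).1| * |(Z u ω).2 - (Z w ω).2| ∂μ) = γv := by
    intro u v w huv huw hvw
    have hgm : Measurable (fun q : (ℝ × ℝ) × ((ℝ × ℝ) × (ℝ × ℝ)) =>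
        |q.1.1 - q.2.1.1| * |q.1.2 - q.2.2.2|) :=
      (measurable_fst.fst.sub measurable_snd.fst.fst).abs.mul
        ((measurable_fst.snd.sub measurable_snd.snd.snd).abs)
    have h := integral_map (μ := μ)
      ((hmeas u).prodMk ((hmeas v).prodMk (hmeas w))).aemeasurable
      hgm.aestronglyMeasurable
    rw [htrip u v w huv huw hvw] at h
    exact h.symm
  have hβint : ∀ i j s t : Fin n, i ≠ j → s ≠ t → i ≠ s → i ≠ t → j ≠ s → j ≠ t →
      (∫ ω, |(Z i ω).1 - (Z j ω).1| * |(Z s ω).2 - (Z t ω).2| ∂μ) = Av * Bv := by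
    intro i j s t hij hst his hit hjs hjt
    have hgm : Measurable (fun q : ((ℝ × ℝ) × (ℝ × ℝ)) × ((ℝ × ℝ) × (ℝ × ℝ)) =>
        |q.1.1.1 - q.1.2.1| * |q.2.1.2 - q.2.2.2|) :=
      (measurable_fst.fst.fst.sub measurable_fst.snd.fst).abs.mul
        ((measurable_snd.fst.snd.sub measurable_snd.snd.snd).abs)
    have h := integral_map (μ := μ)
      (((hmeas i).prodMk (hmeas j)).prodMk ((hmeas s).prodMk (hmeas t))).aemeasurable
      hgm.aestronglyMeasurable
    rw [hquad i j s t hij hst his hit hjs hjt] at h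
    have h2 := integral_prod_mul (μ := ν.prod ν) (ν := ν.prod ν)
      (f := fun p : (ℝ × ℝ) × (ℝ × ℝ) => |p.1.1 - p.2.1|)
      (g := fun p : (ℝ × ℝ) × (ℝ × ℝ) => |p.1.2 - p.2.2|)
    exact h.symm.trans h2
  have hAint : ∀ i j : Fin n, i ≠ j → (∫ ω, |(Z i ω).1 - (Z j ω).1| ∂μ) = Av := by
    intro i j hij
    have hgm : Measurable (fun p : (ℝ × ℝ) × (ℝ × ℝ) => |p.1.1 - p.2.1|) :=
      (measurable_fst.fst.sub measurable_snd.fst).abs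
    have h := integral_map (μ := μ) ((hmeas i).prodMk (hmeas j)).aemeasurable
      hgm.aestronglyMeasurable
    rw [hpair i j hij] at h
    exact h.symm
  have hBint : ∀ i j : Fin n, i ≠ j → (∫ ω, |(Z i ω).2 - (Z j ω).2| ∂μ) = Bv := by
    intro i j hij
    have hgm : Measurable (fun p : (ℝ × ℝ) × (ℝ × ℝ) => |p.1.2 - p.2.2|) :=
      (measurable_fst.snd.sub measurable_snd.snd).abs
    have h := integral_map (μ := μ) ((hmeas i).prodMk (hmeas j)).aemeasurable
      hgm.aestronglyMeasurable
    rw [hpair i j hij] at h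
    exact h.symm
  -- integrability
  have hfst : ∀ i, MemLp (fun ω => (Z i ω).1) 2 μ := by
    intro i
    have h1 : AEStronglyMeasurable (fun p : ℝ × ℝ => p.1) (μ.map (Z i)) :=
      measurable_fst.aestronglyMeasurable
    have h2 : MemLp (fun p : ℝ × ℝ => p.1) 2 (μ.map (Z i)) := by
      rw [hlaw i]
      exact (memLp_map_measure_iff measurable_fst.aestronglyMeasurable
        hXYm.aemeasurable).mpr hX
    exact (memLp_map_measure_iff h1 (hmeas i).aemeasurable).mp h2
  have hsnd : ∀ i, MemLp (fun ω => (Z i ω).2) 2 μ := by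
    intro i
    have h1 : AEStronglyMeasurable (fun p : ℝ × ℝ => p.2) (μ.map (Z i)) :=
      measurable_snd.aestronglyMeasurable
    have h2 : MemLp (fun p : ℝ × ℝ => p.2) 2 (μ.map (Z i)) := by
      rw [hlaw i]
      exact (memLp_map_measure_iff measurable_snd.aestronglyMeasurable
        hXYm.aemeasurable).mpr hY
    exact (memLp_map_measure_iff h1 (hmeas i).aemeasurable).mp h2
  have haL2 : ∀ i j : Fin n, MemLp (fun ω => |(Z i ω).1 - (Z j ω).1|) 2 μ := by
    intro i j
    have h := ((hfst i).sub (hfst j)).norm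
    simpa [Real.norm_eq_abs] using h
  have hbL2 : ∀ i j : Fin n, MemLp (fun ω => |(Z i ω).2 - (Z j ω).2|) 2 μ := by
    intro i j
    have h := ((hsnd i).sub (hsnd j)).norm
    simpa [Real.norm_eq_abs] using h
  have hab : ∀ i j s t : Fin n,
      Integrable (fun ω => |(Z i ω).1 - (Z j ω).1| * |(Z s ω).2 - (Z t ω).2|) μ :=
    fun i j s t => L2mul_integrable (haL2 i j) (hbL2 s t)
  -- the master pattern formula
  have hI : ∀ i j s t : Fin n, (∫ ω, |(Z i ω).1 - (Z j ω).1| * |(Z s ω).2 - (Z t ω).2| ∂μ)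
      = if i = j ∨ s = t then 0
        else if (s = i ∧ t = j) ∨ (s = j ∧ t = i) then αv
        else if s = i ∨ s = j ∨ t = i ∨ t = j then γv
        else Av * Bv := by
    intro i j s t
    by_cases h1 : i = j
    · rw [if_pos (Or.inl h1), h1]
      simp
    by_cases h2 : s = t
    · rw [if_pos (Or.inr h2), h2]
      simp
    rw [if_neg (by tauto)]
    by_cases h3 : s = i
    · by_cases h4 : t = j
      · rw [if_pos (Or.inl ⟨h3, h4⟩), h3, h4]
        exact hIpair i j h1
      · rw [if_neg (fun hor => hor.elim (fun h => h4 h.2) (fun h => h1 (h3.symm.trans h.1))),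
          if_pos (Or.inl h3), h3]
        exact hγint i j t h1 (fun h => h2 (h3.trans h)) (fun h => h4 h.symm)
    by_cases h5 : s = j
    · by_cases h6 : t = i
      · rw [if_pos (Or.inr ⟨h5, h6⟩), h5, h6]
        have hc : ∀ ω : Ω, |(Z j ω).2 - (Z i ω).2| = |(Z i ω).2 - (Z j ω).2| :=
          fun ω => abs_sub_comm _ _
        simp_rw [hc]
        exact hIpair i j h1
      · rw [if_neg (fun hor => hor.elim (fun h => h1 (h.1.symm.trans h5)) (fun h => h6 h.2)),
          if_pos (Or.inr (Or.inl h5)), h5]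
        have hc : ∀ ω : Ω, |(Z i ω).1 - (Z j ω).1| = |(Z j ω).1 - (Z i ω).1| :=
          fun ω => abs_sub_comm _ _
        simp_rw [hc]
        exact hγint j i t (Ne.symm h1) (fun h => h2 (h5.trans h)) (fun h => h6 h.symm)
    by_cases h7 : t = i
    · rw [if_neg (fun hor => hor.elim (fun h => h3 h.1) (fun h => h5 h.1)),
        if_pos (Or.inr (Or.inr (Or.inl h7))), h7]
      have hc : ∀ ω : Ω, |(Z s ω).2 - (Z i ω).2| = |(Z i ω).2 - (Z s ω).2| :=
        fun ω => abs_sub_comm _ _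
      simp_rw [hc]
      exact hγint i j s h1 (fun h => h3 h.symm) (fun h => h5 h.symm)
    by_cases h8 : t = j
    · rw [if_neg (fun hor => hor.elim (fun h => h3 h.1) (fun h => h5 h.1)),
        if_pos (Or.inr (Or.inr (Or.inr h8))), h8]
      have hc1 : ∀ ω : Ω, |(Z i ω).1 - (Z j ω).1| = |(Z j ω).1 - (Z i ω).1| :=
        fun ω => abs_sub_comm _ _
      have hc2 : ∀ ω : Ω, |(Z s ω).2 - (Z j ω).2| = |(Z j ω).2 - (Z s ω).2| :=
        fun ω => abs_sub_comm _ _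
      simp_rw [hc1, hc2]
      exact hγint j i s (Ne.symm h1) (fun h => h5 h.symm) (fun h => h3 h.symm)
    · rw [if_neg (fun hor => hor.elim (fun h => h3 h.1) (fun h => h5 h.1)),
        if_neg (fun hor => hor.elim h3 (fun hor2 => hor2.elim h5 (fun hor3 => hor3.elim h7 h8)))]
      exact hβint i j s t h1 h2 (fun h => h3 h.symm) (fun h => h7 h.symm)
        (fun h => h5 h.symm) (fun h => h8 h.symm)
  -- expansion machinery
  set e : Fin 4 → ℝ := ![1, -(1/((n:ℝ)-2)), -(1/((n:ℝ)-2)), 1/(((n:ℝ)-1)*((n:ℝ)-2))] with he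
  set Pf : Fin n → Fin n → Fin 4 → Finset (Fin n × Fin n) :=
    fun k l => ![{(k,l)}, {k} ×ˢ univ, univ ×ˢ {l}, univ ×ˢ univ] with hPf
  have hu1 : ∀ (k l : Fin n), k ≠ l → ∀ ω,
      uCenter n (fun k' l' => |(Z k' ω).1 - (Z l' ω).1|) k l
        = ∑ i, e i * (∑ r ∈ Pf k l i, |(Z r.1 ω).1 - (Z r.2 ω).1|) := by
    intro k l hkl ω
    simp only [uCenter, if_neg hkl, he, hPf, Fin.sum_univ_four, Matrix.cons_val_zero,
      Matrix.cons_val_one, Matrix.cons_val_two, Matrix.cons_val_three, Matrix.head_cons,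
      Matrix.tail_cons, Finset.sum_singleton, Finset.sum_product]
    ring
  have hu2 : ∀ (k l : Fin n), k ≠ l → ∀ ω,
      uCenter n (fun k' l' => |(Z k' ω).2 - (Z l' ω).2|) k l
        = ∑ i, e i * (∑ r ∈ Pf k l i, |(Z r.1 ω).2 - (Z r.2 ω).2|) := by
    intro k l hkl ω
    simp only [uCenter, if_neg hkl, he, hPf, Fin.sum_univ_four, Matrix.cons_val_zero,
      Matrix.cons_val_one, Matrix.cons_val_two, Matrix.cons_val_three, Matrix.head_cons,
      Matrix.tail_cons, Finset.sum_singleton, Finset.sum_product]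
    ring
  have hpqint : ∀ (k l : Fin n) (i j : Fin 4), Integrable (fun ω =>
      (∑ r ∈ Pf k l i, |(Z r.1 ω).1 - (Z r.2 ω).1|)
        * (∑ r' ∈ Pf k l j, |(Z r'.1 ω).2 - (Z r'.2 ω).2|)) μ := by
    intro k l i j
    simp_rw [Finset.sum_mul_sum]
    exact integrable_finset_sum _ fun r _ =>
      integrable_finset_sum _ fun r' _ => hab r.1 r.2 r'.1 r'.2
  set Gv : ℝ := ((n:ℝ)-3)/((n:ℝ)-1) * (αv + Av*Bv - 2*γv) with hGv
  -- the per-(k,l) expectation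
  have hFG : ∀ k l : Fin n, k ≠ l →
      (∫ ω, uCenter n (fun k' l' => |(Z k' ω).1 - (Z l' ω).1|) k l
        * uCenter n (fun k' l' => |(Z k' ω).2 - (Z l' ω).2|) k l ∂μ) = Gv := by
    intro k l hkl
    simp_rw [hu1 k l hkl, hu2 k l hkl]
    rw [expand16 μ e e _ _ (hpqint k l)]
    have hJ : ∀ i j : Fin 4, (∫ ω, (∑ r ∈ Pf k l i, |(Z r.1 ω).1 - (Z r.2 ω).1|)
        * (∑ r' ∈ Pf k l j, |(Z r'.1 ω).2 - (Z r'.2 ω).2|) ∂μ)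
        = ∑ r ∈ Pf k l i, ∑ r' ∈ Pf k l j,
            (∫ ω, |(Z r.1 ω).1 - (Z r.2 ω).1| * |(Z r'.1 ω).2 - (Z r'.2 ω).2| ∂μ) :=
      fun i j => integral_sum_mul_sum' μ (Pf k l i) (Pf k l j) _ _
        (fun r r' => hab r.1 r.2 r'.1 r'.2)
    simp_rw [hJ]
    simp only [hPf, Fin.sum_univ_four, Matrix.cons_val_zero, Matrix.cons_val_one,
      Matrix.cons_val_two, Matrix.cons_val_three, Matrix.head_cons, Matrix.tail_cons,
      Finset.sum_singleton, Finset.sum_product]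
    rw [hIpair k l hkl]
    rw [cE1 hI hn hkl, cE2 hI hn hkl, cA3 hI hn hkl, cA4 hI hn hkl, cA5 hI hn (k := k),
      cA6 hI hn hkl, cA7 hI hn (k := k), cA8 hI hn hkl, cA9 hI hn hkl, cA10 hI hn (l := l),
      cA11 hI hn (l := l), cA12 hI hn hkl, cA13 hI hn (k := k), cA14 hI hn (l := l),
      cA15 hI hn]
    simp only [he, Matrix.cons_val_zero, Matrix.cons_val_one, Matrix.cons_val_two,
      Matrix.cons_val_three, Matrix.head_cons, Matrix.tail_cons, hGv]
    field_simp
    ring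
  -- integrability of summands
  have hTint : ∀ k l : Fin n, Integrable (fun ω => if k ≠ l then
      uCenter n (fun k' l' => |(Z k' ω).1 - (Z l' ω).1|) k l *
        uCenter n (fun k' l' => |(Z k' ω).2 - (Z l' ω).2|) k l else 0) μ := by
    intro k l
    by_cases hkl : k ≠ l
    · simp only [if_pos hkl]
      simp_rw [hu1 k l hkl, hu2 k l hkl]
      exact integrable16 μ e e _ _ (hpqint k l)
    · simp only [if_neg hkl]
      exact integrable_const 0
  -- put everything together
  rw [integral_const_mul]
  rw [integral_finset_sum _ (fun k _ => integrable_finset_sum _ (fun l _ => hTint k l))]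
  have hstep : ∀ k : Fin n, (∑ l, ∫ ω, (if k ≠ l then
      uCenter n (fun k' l' => |(Z k' ω).1 - (Z l' ω).1|) k l *
        uCenter n (fun k' l' => |(Z k' ω).2 - (Z l' ω).2|) k l else 0) ∂μ)
      = ((n:ℝ) - 1) * Gv := by
    intro k
    have hval : ∀ l : Fin n, (∫ ω, (if k ≠ l then
        uCenter n (fun k' l' => |(Z k' ω).1 - (Z l' ω).1|) k l *
          uCenter n (fun k' l' => |(Z k' ω).2 - (Z l' ω).2|) k l else 0) ∂μ)
        = if k ≠ l then Gv else 0 := by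
      intro l
      by_cases hkl : k ≠ l
      · simp only [if_pos hkl]
        exact hFG k l hkl
      · simp only [if_neg hkl]
        exact integral_zero _ _
    simp_rw [hval]
    refine (sum_fin_one' (by omega) k _ 0 Gv (by simp) (fun j hj => by simp [Ne.symm hj])).trans
      (by ring)
  rw [Finset.sum_congr rfl (fun k _ =>
      (integral_finset_sum _ (fun l _ => hTint k l)).trans (hstep k)),
    Finset.sum_const, card_univ, Fintype.card_fin, nsmul_eq_mul]
  rw [hIpair _ _ h01, hAint _ _ h01, hBint _ _ h01, hγint _ _ _ h01 h02 h12, hGv]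
  field_simp
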